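/- arXiv:2504.01746 — 6 statements merged into one kernel-verified Lean document; each statement's English description precedes it below -/
import Mathlib

section
/- For every n ≥ 1, the intersection of the kernel of the multiplication map μ with the kernel of the opposite multiplication map μ° inside M_n ⊗ M_n has dimension equal to (n²−1)². -/
/-!
Put `Φ = (μ, μ°) : Mₙ ⊗ Mₙ → Mₙ × Mₙ`, so that `ker μ ⊓ ker μ° = ker Φ`. Since `tr (ab) = tr (ba)`,
the range of `Φ` lies in the hyperplane `{(x, y) | tr x = tr y}`, and it is all of it: with
`Eᵢⱼ` the matrix units, `Φ (∑ cᵢⱼ Eᵢ₁ ⊗ E₁ⱼ) = (c, tr c • E₁₁)` and `Φ (y ⊗ 1) = (y, y)`.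
Rank–nullity then gives `dim ker Φ = n⁴ - (2n² - 1) = (n² - 1)²`.
-/

open TensorProduct

/-- The multiplication map `μ : Mₙ ⊗ Mₙ → Mₙ`, `a ⊗ b ↦ a * b`. -/
noncomputable def matMul (n : ℕ) :
    Matrix (Fin n) (Fin n) ℂ ⊗[ℂ] Matrix (Fin n) (Fin n) ℂ →ₗ[ℂ] Matrix (Fin n) (Fin n) ℂ :=
  LinearMap.mul' ℂ _

/-- The opposite multiplication map `μ° : Mₙ ⊗ Mₙ → Mₙ`, `a ⊗ b ↦ b * a`. -/
noncomputable def matMulOp (n : ℕ) :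
    Matrix (Fin n) (Fin n) ℂ ⊗[ℂ] Matrix (Fin n) (Fin n) ℂ →ₗ[ℂ] Matrix (Fin n) (Fin n) ℂ :=
  (LinearMap.mul' ℂ _).comp (TensorProduct.comm ℂ _ _).toLinearMap

namespace LinearMap

variable (K A : Type*) [CommSemiring K] [Semiring A] [Algebra K A]

noncomputable def mulProdMulOp : A ⊗[K] A →ₗ[K] A × A :=
  (mul' K A).prod (mul' K A ∘ₗ (TensorProduct.comm K A A).toLinearMap)

variable {K A}

@[simp]
theorem mulProdMulOp_tmul (a b : A) : mulProdMulOp K A (a ⊗ₜ b) = (a * b, b * a) := rfl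

end LinearMap

open LinearMap Module

namespace Matrix

variable {K ι : Type*} [Fintype ι]

theorem mulProdMulOp_sum_single [CommSemiring K] [DecidableEq ι] (z : ι) (c : Matrix ι ι K) :
    mulProdMulOp K (Matrix ι ι K) (∑ i, ∑ j, single i z (c i j) ⊗ₜ single z j 1) =
      (c, single z z c.trace) := by
  simp only [map_sum, mulProdMulOp_tmul, Prod.fst_sum, Prod.snd_sum, single_mul_single_same,
    mul_one, Prod.ext_iff, ← matrix_eq_sum_single, true_and]
  calc ∑ i, ∑ j, single z j 1 * single i z (c i j)
      = ∑ i, single z z (c i i) := by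
        refine Finset.sum_congr rfl fun i _ => ?_
        rw [Finset.sum_eq_single i (fun j _ hji => single_mul_single_of_ne _ _ _ _ hji _)
          (by simp), single_mul_single_same, one_mul]
    _ = single z z c.trace := by
        simp only [trace, diag, ← singleAddMonoidHom_apply, map_sum]

variable (K ι) in
noncomputable def traceSub [CommRing K] : Matrix ι ι K × Matrix ι ι K →ₗ[K] K :=
  traceLinearMap ι K K ∘ₗ fst K _ _ - traceLinearMap ι K K ∘ₗ snd K _ _

@[simp]
theorem traceSub_apply [CommRing K] (p : Matrix ι ι K × Matrix ι ι K) :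
    traceSub K ι p = p.1.trace - p.2.trace := rfl

theorem traceSub_surjective [CommRing K] [DecidableEq ι] [Nonempty ι] :
    Function.Surjective (traceSub K ι) := by
  obtain ⟨z⟩ := ‹Nonempty ι›
  exact fun a => ⟨(single z z a, 0), by simp⟩

theorem range_mulProdMulOp [CommRing K] [DecidableEq ι] [Nonempty ι] :
    range (mulProdMulOp K (Matrix ι ι K)) = ker (traceSub K ι) := by
  apply le_antisymm
  · rintro _ ⟨t, rfl⟩
    induction t using TensorProduct.induction_on with
    | zero => simp
    | tmul a b => simp [trace_mul_comm a b]
    | add s t hs ht => rw [map_add]; exact add_mem hs ht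
  · rintro ⟨x, y⟩ hxy
    obtain ⟨z⟩ := ‹Nonempty ι›
    have hsingle (c : Matrix ι ι K) : (c, single z z c.trace) ∈ range (mulProdMulOp K _) :=
      ⟨_, mulProdMulOp_sum_single z c⟩
    have hdiag : (y, y) ∈ range (mulProdMulOp K (Matrix ι ι K)) := ⟨y ⊗ₜ 1, by simp⟩
    have hdecomp : (x, y) = (x, single z z x.trace) - (y, single z z y.trace) + (y, y) := by
      rw [sub_eq_zero.mp (show x.trace - y.trace = 0 from hxy)]
      simp
    rw [hdecomp]
    exact add_mem (sub_mem (hsingle x) (hsingle y)) hdiag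

theorem finrank_ker_mulProdMulOp [Field K] [DecidableEq ι] [Nonempty ι] :
    finrank K (ker (mulProdMulOp K (Matrix ι ι K))) = (Fintype.card ι ^ 2 - 1) ^ 2 := by
  have hΦ := finrank_range_add_finrank_ker (mulProdMulOp K (Matrix ι ι K))
  have htr := finrank_range_add_finrank_ker (traceSub K ι)
  rw [range_mulProdMulOp] at hΦ
  rw [range_eq_top.mpr traceSub_surjective, finrank_top, finrank_self] at htr
  simp only [finrank_tensorProduct, finrank_prod, finrank_matrix, finrank_self, mul_one] at hΦ htr
  obtain ⟨m, hm⟩ := Nat.exists_eq_add_of_le' (Nat.one_le_iff_ne_zero.mpr <|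
    pow_ne_zero 2 (Fintype.card_ne_zero (α := ι)))
  rw [← sq (Fintype.card ι), hm] at hΦ htr
  rw [hm, Nat.add_sub_cancel]
  nlinarith

end Matrix

theorem stmt1 (n : ℕ) (hn : 1 ≤ n) :
    Module.finrank ℂ ↥(LinearMap.ker (matMul n) ⊓ LinearMap.ker (matMulOp n)) =
      (n ^ 2 - 1) ^ 2 := by
  have : Nonempty (Fin n) := ⟨⟨0, hn⟩⟩
  rw [← LinearMap.ker_prod]
  exact (Matrix.finrank_ker_mulProdMulOp (K := ℂ) (ι := Fin n)).trans (by rw [Fintype.card_fin])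
end

section
/- For every n ≥ 1, the intersection ker μ ∩ ker μ° inside M_n ⊗ M_n equals the tensor product sl_n ⊗ sl_n of the space of traceless matrices with itself, embedded suitably: precisely, after identifying M_n ⊗ M_n with End(V) ⊗ End(V) for V = ℂⁿ, an element lies in ker μ ∩ ker μ° if and only if it lies in the span of tensors a ⊗ b with a, b traceless, under the cyclic reindexing described by evaluation against the inner tensorands. -/
open TensorProduct

/-- The element of `Mₙ ⊗ Mₙ` obtained from a pair `(a, b)` of matrices by the cyclic
reindexing: identifying `Mₙ ⊗ Mₙ` with `V ⊗ V* ⊗ V ⊗ V*` (`V = ℂⁿ`), the inner pair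
`V* ⊗ V` carries `a` and the outer pair `V ⊗ V*` carries `b`; in coordinates its
`((i,j),(k,l))` entry is `a j k * b l i`. -/
noncomputable def cyclicEmbed (n : ℕ) (a b : Matrix (Fin n) (Fin n) ℂ) :
    Matrix (Fin n) (Fin n) ℂ ⊗[ℂ] Matrix (Fin n) (Fin n) ℂ :=
  ∑ i : Fin n, ∑ j : Fin n, ∑ k : Fin n, ∑ l : Fin n,
    (a j k * b l i) • (Matrix.single i j (1 : ℂ) ⊗ₜ[ℂ] Matrix.single k l (1 : ℂ))

/-!
Let `Φ` be the linear endomorphism of `Mₙ ⊗ Mₙ` induced by `cyclicEmbed`; it permutes the basis,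
`Eᵢⱼ ⊗ Eₖₗ ↦ Eₗᵢ ⊗ Eⱼₖ`, so it is an automorphism. Since `Eₗᵢ Eⱼₖ = tr (Eᵢⱼ) Eₖₗᵀ`, under `Φ`
the map `μ` becomes the partial trace over the first factor followed by a transpose, and
symmetrically `μ°` becomes the partial trace over the second factor. The joint kernel of the two
partial traces is `slₙ ⊗ slₙ`: the tensor square of the projection `a ↦ a - (tr a / n) • 1`
fixes it, and its image is spanned by tensors of traceless matrices.
-/

section SplitKernels

open LinearMap

variable {R V V' W W' : Type*} [CommRing R] [AddCommGroup V] [Module R V] [AddCommGroup V']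
  [Module R V'] [AddCommGroup W] [Module R W] [AddCommGroup W'] [Module R W']

theorem ker_rTensor_inf_ker_lTensor_eq_span {f : V →ₗ[R] V'} {g : W →ₗ[R] W'}
    {s : V' →ₗ[R] V} {t : W' →ₗ[R] W} (hs : f ∘ₗ s = .id) (ht : g ∘ₗ t = .id) :
    ker (f.rTensor W) ⊓ ker (g.lTensor V) =
      Submodule.span R {z | ∃ a b, f a = 0 ∧ g b = 0 ∧ z = a ⊗ₜ[R] b} := by
  refine le_antisymm (fun y hy ↦ ?_) (Submodule.span_le.mpr ?_)
  · obtain ⟨hf, hg⟩ := Submodule.mem_inf.mp hy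
    -- `id - s ∘ f` projects onto `ker f`, `id - t ∘ g` onto `ker g`, and their correction
    -- terms vanish on `y` because `(f ⊗ 1) y = 0 = (1 ⊗ g) y`.
    have hfix : map (LinearMap.id - s ∘ₗ f) (LinearMap.id - t ∘ₗ g) y = y := by
      rw [mem_ker] at hf hg
      rw [← rTensor_comp_lTensor, comp_apply, lTensor_sub, lTensor_comp, rTensor_sub,
        rTensor_comp]
      simp [hf, hg]
    have hy := mem_range_self (map (LinearMap.id - s ∘ₗ f) (LinearMap.id - t ∘ₗ g)) y
    rw [hfix, range_map_eq_span_tmul] at hy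
    refine Submodule.span_mono ?_ hy
    rintro _ ⟨a, b, rfl⟩
    refine ⟨_, _, ?_, ?_, rfl⟩ <;> simp [← comp_apply f s, hs, ← comp_apply g t, ht]
  · rintro _ ⟨a, b, ha, hb, rfl⟩
    simp [ha, hb]

end SplitKernels

open Matrix

theorem Matrix.traceLinearMap_comp_toSpanSingleton {m R : Type*} [Fintype m] [DecidableEq m]
    [Field R] (h : (Fintype.card m : R) ≠ 0) :
    traceLinearMap m R R ∘ₗ LinearMap.toSpanSingleton R _ ((Fintype.card m : R)⁻¹ • 1) =
      LinearMap.id := by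
  ext
  simp [h]

theorem Matrix.tensorProduct_linearMap_ext {m n m' n' R A : Type*} [Fintype m] [Fintype n]
    [Fintype m'] [Fintype n'] [DecidableEq m] [DecidableEq n] [DecidableEq m'] [DecidableEq n']
    [CommSemiring R] [AddCommMonoid A] [Module R A]
    {f g : Matrix m n R ⊗[R] Matrix m' n' R →ₗ[R] A}
    (h : ∀ i j k l, f (single i j 1 ⊗ₜ single k l 1) = g (single i j 1 ⊗ₜ single k l 1)) :
    f = g :=
  ((stdBasis R m n).tensorProduct (stdBasis R m' n')).ext fun ⟨⟨i, j⟩, ⟨k, l⟩⟩ ↦ by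
    simpa [stdBasis_eq_single] using h i j k l

section CyclicEmbed

variable (n : ℕ)

local notation "M" => Matrix (Fin n) (Fin n) ℂ

noncomputable def cyclicEmbedBilin : M →ₗ[ℂ] M →ₗ[ℂ] M ⊗[ℂ] M :=
  LinearMap.mk₂ ℂ (cyclicEmbed n)
    (fun a a' b ↦ by simp [cyclicEmbed, add_mul, add_smul, Finset.sum_add_distrib])
    (fun r a b ↦ by simp [cyclicEmbed, Finset.smul_sum, smul_smul, mul_assoc])
    (fun a b b' ↦ by simp [cyclicEmbed, mul_add, add_smul, Finset.sum_add_distrib])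
    (fun r a b ↦ by simp [cyclicEmbed, Finset.smul_sum, smul_smul, mul_left_comm])

noncomputable def cyclicEmbedHom : M ⊗[ℂ] M →ₗ[ℂ] M ⊗[ℂ] M :=
  TensorProduct.lift (cyclicEmbedBilin n)

@[simp]
theorem cyclicEmbedHom_tmul (a b : M) : cyclicEmbedHom n (a ⊗ₜ b) = cyclicEmbed n a b := rfl

@[simp]
theorem cyclicEmbed_single_single (i j k l : Fin n) :
    cyclicEmbed n (single i j 1) (single k l 1) = single l i (1 : ℂ) ⊗ₜ[ℂ] single j k 1 := by
  simp [cyclicEmbed, Matrix.single_apply, ite_and, ite_smul, Finset.sum_ite_eq]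

theorem cyclicEmbedHom_comp_cyclicEmbedHom_comp_comm :
    cyclicEmbedHom n ∘ₗ cyclicEmbedHom n ∘ₗ (TensorProduct.comm ℂ M M).toLinearMap =
      LinearMap.id :=
  tensorProduct_linearMap_ext fun _ _ _ _ ↦ by simp

theorem cyclicEmbedHom_comp_comm_comp_cyclicEmbedHom :
    cyclicEmbedHom n ∘ₗ (TensorProduct.comm ℂ M M).toLinearMap ∘ₗ cyclicEmbedHom n =
      LinearMap.id :=
  tensorProduct_linearMap_ext fun _ _ _ _ ↦ by simp

theorem cyclicEmbedHom_bijective : Function.Bijective (cyclicEmbedHom n) :=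
  ⟨Function.LeftInverse.injective (g := cyclicEmbedHom n ∘ₗ (TensorProduct.comm ℂ M M).toLinearMap)
      (LinearMap.congr_fun (cyclicEmbedHom_comp_comm_comp_cyclicEmbedHom n)),
    Function.RightInverse.surjective
      (LinearMap.congr_fun (cyclicEmbedHom_comp_cyclicEmbedHom_comp_comm n))⟩

theorem matMul_comp_cyclicEmbedHom :
    matMul n ∘ₗ cyclicEmbedHom n =
      (transposeLinearEquiv (Fin n) (Fin n) ℂ ℂ).toLinearMap ∘ₗ
        (TensorProduct.lid ℂ M).toLinearMap ∘ₗ (traceLinearMap (Fin n) ℂ ℂ).rTensor M :=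
  tensorProduct_linearMap_ext fun i j k l ↦ by
    by_cases hij : i = j
    · subst hij; simp [matMul]
    · simp [matMul, hij]

theorem matMulOp_comp_cyclicEmbedHom :
    matMulOp n ∘ₗ cyclicEmbedHom n =
      (transposeLinearEquiv (Fin n) (Fin n) ℂ ℂ).toLinearMap ∘ₗ
        (TensorProduct.rid ℂ M).toLinearMap ∘ₗ (traceLinearMap (Fin n) ℂ ℂ).lTensor M :=
  tensorProduct_linearMap_ext fun i j k l ↦ by
    by_cases hkl : k = l
    · subst hkl; simp [matMulOp]
    · simp [matMulOp, hkl]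

end CyclicEmbed

theorem stmt2 (n : ℕ) (hn : 1 ≤ n) (x : Matrix (Fin n) (Fin n) ℂ ⊗[ℂ] Matrix (Fin n) (Fin n) ℂ) :
    (x ∈ LinearMap.ker (matMul n) ⊓ LinearMap.ker (matMulOp n)) ↔
      x ∈ Submodule.span ℂ
        {y | ∃ a b : Matrix (Fin n) (Fin n) ℂ,
          a.trace = 0 ∧ b.trace = 0 ∧ y = cyclicEmbed n a b} := by
  have hcard : (Fintype.card (Fin n) : ℂ) ≠ 0 := by simp; omega
  have hS : {y | ∃ a b : Matrix (Fin n) (Fin n) ℂ,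
        a.trace = 0 ∧ b.trace = 0 ∧ y = cyclicEmbed n a b} =
      cyclicEmbedHom n '' {z | ∃ a b : Matrix (Fin n) (Fin n) ℂ,
        traceLinearMap (Fin n) ℂ ℂ a = 0 ∧ traceLinearMap (Fin n) ℂ ℂ b = 0 ∧ z = a ⊗ₜ b} := by
    ext; simp [and_assoc, eq_comm]
  suffices LinearMap.ker (matMul n) ⊓ LinearMap.ker (matMulOp n) = Submodule.span ℂ _ from
    SetLike.ext_iff.mp this x
  refine Submodule.comap_injective_of_surjective (cyclicEmbedHom_bijective n).surjective ?_
  rw [Submodule.comap_inf, ← LinearMap.ker_comp, ← LinearMap.ker_comp,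
    matMul_comp_cyclicEmbedHom, matMulOp_comp_cyclicEmbedHom,
    LinearEquiv.ker_comp, LinearEquiv.ker_comp, LinearEquiv.ker_comp, LinearEquiv.ker_comp,
    ker_rTensor_inf_ker_lTensor_eq_span (traceLinearMap_comp_toSpanSingleton hcard)
      (traceLinearMap_comp_toSpanSingleton hcard),
    hS, Submodule.span_image,
    Submodule.comap_map_eq_of_injective (cyclicEmbedHom_bijective n).injective]
end

section
/- For n ≥ 1, the left ideal of the algebra M_n ⊗ M_n° (the enveloping algebra of M_n, where the second tensor factor carries the opposite multiplication) generated by the set of all elements p ⊗ (1−p) with p a projection in M_n is exactly the kernel of the multiplication map μ : M_n ⊗ M_n° → M_n, μ(a⊗b) = ab. -/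
/-!
Write `δ a = a ⊗ 1 - 1 ⊗ a°`. For any algebra `A`, the left ideal generated by `δ(T)`, for a set
`T` spanning `A`, is the kernel of `μ`: every `x` is congruent to `μ(x) ⊗ 1` modulo it, since
`c ⊗ d° - cd ⊗ 1 = -(c ⊗ 1) δ(d)`. For an idempotent `p`, `δ p = p ⊗ (1 - p)° - (1 - p) ⊗ p°`, and
`1 - p` is again a projection, so it remains to see that projections span `Mₙ`: `v v*` is a
multiple of a projection, and polarization writes every `u w*`, in particular every matrix unit,
through such rank-one matrices.
-/

open TensorProduct

/-- The multiplication map `μ : Mₙ ⊗ Mₙ° → Mₙ`, `a ⊗ b° ↦ a * b`. -/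
noncomputable def envMul (n : ℕ) :
    Matrix (Fin n) (Fin n) ℂ ⊗[ℂ] (Matrix (Fin n) (Fin n) ℂ)ᵐᵒᵖ →ₗ[ℂ] Matrix (Fin n) (Fin n) ℂ :=
  TensorProduct.lift (LinearMap.mk₂ ℂ (fun a b => a * MulOpposite.unop b)
    (fun a a' b => by simp [add_mul])
    (fun c a b => by simp [Matrix.smul_mul])
    (fun a b b' => by simp [mul_add])
    (fun c a b => by simp [Matrix.mul_smul]))

open MulOpposite Matrix

section ProjectionsSpan

variable {m : Type*} [Fintype m]

theorem isStarProjection_inv_smul_vecMulVec {K : Type*} [Field K] [StarRing K] (v : m → K)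
    (hv : star v ⬝ᵥ v ≠ 0) : IsStarProjection ((star v ⬝ᵥ v)⁻¹ • vecMulVec v (star v)) := by
  have hsa : star (star v ⬝ᵥ v) = star v ⬝ᵥ v := (star_dotProduct v v).symm
  constructor
  · rw [IsIdempotentElem, smul_mul_smul_comm, vecMulVec_mul_vecMulVec, vecMulVec_smul, smul_smul,
      mul_assoc, inv_mul_cancel₀ hv, mul_one]
  · rw [IsSelfAdjoint, star_smul, star_inv₀, hsa, star_eq_conjTranspose, conjTranspose_vecMulVec,
      star_star]

open scoped ComplexOrder in
theorem vecMulVec_star_self_mem_span_isStarProjection {𝕜 : Type*} [RCLike 𝕜] (v : m → 𝕜) :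
    vecMulVec v (star v) ∈ Submodule.span 𝕜 {p : Matrix m m 𝕜 | IsStarProjection p} := by
  by_cases hv : v = 0
  · simp [hv]
  · have hv' : star v ⬝ᵥ v ≠ 0 := dotProduct_star_self_eq_zero.not.mpr hv
    have hp := Submodule.smul_mem _ (star v ⬝ᵥ v)
      (Submodule.subset_span (isStarProjection_inv_smul_vecMulVec v hv'))
    rwa [smul_inv_smul₀ hv'] at hp

open Complex ComplexConjugate in
theorem two_smul_vecMulVec_star (u w : m → ℂ) :
    (2 : ℂ) • vecMulVec u (star w) =
      (vecMulVec (u + w) (star (u + w)) - vecMulVec u (star u) - vecMulVec w (star w)) +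
        I • (vecMulVec (u + I • w) (star (u + I • w)) - vecMulVec u (star u) -
          vecMulVec w (star w)) := by
  ext i j
  simp only [Matrix.smul_apply, vecMulVec_apply, Matrix.add_apply, Matrix.sub_apply, Pi.add_apply,
    Pi.smul_apply, Pi.star_apply, star_add, star_smul, Complex.star_def, conj_I, smul_eq_mul]
  linear_combination (u i * conj (w j) + conj (w j) * w i * I - w i * conj (u j)) * I_sq

variable [DecidableEq m]

theorem span_vecMulVec_star_self :
    Submodule.span ℂ (Set.range fun v : m → ℂ => vecMulVec v (star v)) = ⊤ := by
  set V := Submodule.span ℂ (Set.range fun v : m → ℂ => vecMulVec v (star v))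
  have hmem (v : m → ℂ) : vecMulVec v (star v) ∈ V := Submodule.subset_span ⟨v, rfl⟩
  have hsingle (i j : m) : single i j (1 : ℂ) ∈ V := by
    have h := V.smul_mem (2⁻¹ : ℂ) <|
      (two_smul_vecMulVec_star (Pi.single i 1) (Pi.single j 1)).symm ▸
        add_mem (sub_mem (sub_mem (hmem _) (hmem _)) (hmem _))
          (V.smul_mem _ (sub_mem (sub_mem (hmem _) (hmem _)) (hmem _)))
    rwa [inv_smul_smul₀ two_ne_zero, Pi.star_single, star_one,
      ← single_eq_single_vecMulVec_single] at h
  refine top_unique fun a _ => ?_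
  rw [matrix_eq_sum_single a]
  refine Submodule.sum_mem _ fun i _ => Submodule.sum_mem _ fun j _ => ?_
  simpa using V.smul_mem (a i j) (hsingle i j)

theorem span_isStarProjection :
    Submodule.span ℂ {p : Matrix m m ℂ | IsStarProjection p} = ⊤ :=
  top_unique <| span_vecMulVec_star_self.symm.le.trans <| Submodule.span_le.mpr <| by
    rintro _ ⟨v, rfl⟩
    exact vecMulVec_star_self_mem_span_isStarProjection v

end ProjectionsSpan

section EnvelopingAlgebra

variable (R A : Type*) [CommRing R] [Ring A] [Algebra R A]

def envelopingMulKer : Ideal (A ⊗[R] Aᵐᵒᵖ) where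
  carrier := {x | AlgHom.mulLeftRight R A x 1 = 0}
  add_mem' hx hy := by simp_all
  zero_mem' := by simp
  smul_mem' y x hx := by simp_all [smul_eq_mul, Module.End.mul_apply]

variable {R A}

theorem mem_envelopingMulKer {x : A ⊗[R] Aᵐᵒᵖ} :
    x ∈ envelopingMulKer R A ↔ AlgHom.mulLeftRight R A x 1 = 0 := Iff.rfl

theorem tmul_one_sub_one_tmul_mem_span {T : Set A} (hT : Submodule.span R T = ⊤) (a : A) :
    a ⊗ₜ[R] op 1 - 1 ⊗ₜ op a ∈ Ideal.span ((fun a : A => a ⊗ₜ[R] op 1 - 1 ⊗ₜ op a) '' T) := by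
  induction (hT ▸ Submodule.mem_top : a ∈ Submodule.span R T) using Submodule.span_induction with
  | mem a ha => exact Ideal.subset_span ⟨a, ha, rfl⟩
  | zero => simp
  | add a b _ _ ha hb =>
    convert add_mem ha hb using 1
    simp only [add_tmul, op_add, tmul_add]
    abel
  | smul r a _ ha =>
    convert Submodule.smul_of_tower_mem _ r ha using 1
    simp [smul_sub, smul_tmul']

theorem sub_mulLeftRight_one_tmul_mem_span {T : Set A} (hT : Submodule.span R T = ⊤)
    (x : A ⊗[R] Aᵐᵒᵖ) :
    x - AlgHom.mulLeftRight R A x 1 ⊗ₜ op 1 ∈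
      Ideal.span ((fun a : A => a ⊗ₜ[R] op 1 - 1 ⊗ₜ op a) '' T) := by
  induction x using TensorProduct.induction_on with
  | zero => simp
  | tmul c d =>
    have h : c ⊗ₜ[R] d - (c * unop d) ⊗ₜ op 1 =
        -((c ⊗ₜ op 1) * (unop d ⊗ₜ op 1 - 1 ⊗ₜ op (unop d))) := by
      simp [mul_sub, neg_sub]
    rw [AlgHom.mulLeftRight_apply, mul_one, h]
    exact neg_mem (Ideal.mul_mem_left _ _ (tmul_one_sub_one_tmul_mem_span hT (unop d)))
  | add x y hx hy =>
    convert add_mem hx hy using 1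
    simp only [map_add, LinearMap.add_apply, add_tmul]
    abel

theorem span_tmul_one_sub_one_tmul_eq_envelopingMulKer {T : Set A}
    (hT : Submodule.span R T = ⊤) :
    Ideal.span ((fun a : A => a ⊗ₜ[R] op 1 - 1 ⊗ₜ op a) '' T) = envelopingMulKer R A := by
  refine le_antisymm (Ideal.span_le.mpr ?_) fun x hx => ?_
  · rintro _ ⟨a, -, rfl⟩
    simp [mem_envelopingMulKer]
  · simpa [mem_envelopingMulKer.mp hx] using sub_mulLeftRight_one_tmul_mem_span hT x

theorem span_tmul_one_sub_eq_envelopingMulKer [StarRing A]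
    (h : Submodule.span R {p : A | IsStarProjection p} = ⊤) :
    Ideal.span ((fun p : A => p ⊗ₜ[R] op (1 - p)) '' {p | IsStarProjection p}) =
      envelopingMulKer R A := by
  refine le_antisymm (Ideal.span_le.mpr ?_) ?_
  · rintro _ ⟨p, hp, rfl⟩
    simp [mem_envelopingMulKer, hp.mul_one_sub_self]
  · rw [← span_tmul_one_sub_one_tmul_eq_envelopingMulKer h, Ideal.span_le]
    rintro _ ⟨p, hp, rfl⟩
    have hδ : p ⊗ₜ[R] op 1 - 1 ⊗ₜ op p = p ⊗ₜ op (1 - p) - (1 - p) ⊗ₜ op (1 - (1 - p)) := by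
      simp only [sub_sub_cancel, op_sub, tmul_sub, sub_tmul]
      abel
    dsimp only [SetLike.mem_coe]
    rw [hδ]
    exact sub_mem (Ideal.subset_span ⟨p, hp, rfl⟩) (Ideal.subset_span ⟨1 - p, hp.one_sub, rfl⟩)

end EnvelopingAlgebra

theorem envMul_eq_mulLeftRight (n : ℕ)
    (x : Matrix (Fin n) (Fin n) ℂ ⊗[ℂ] (Matrix (Fin n) (Fin n) ℂ)ᵐᵒᵖ) :
    envMul n x = AlgHom.mulLeftRight ℂ _ x 1 := by
  induction x using TensorProduct.induction_on with
  | zero => simp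
  | tmul a b => simp [envMul]
  | add x y hx hy => simp [hx, hy]

theorem stmt4_general (n : ℕ)
    (x : Matrix (Fin n) (Fin n) ℂ ⊗[ℂ] (Matrix (Fin n) (Fin n) ℂ)ᵐᵒᵖ) :
    x ∈ Ideal.span
        {y : Matrix (Fin n) (Fin n) ℂ ⊗[ℂ] (Matrix (Fin n) (Fin n) ℂ)ᵐᵒᵖ |
          ∃ p : Matrix (Fin n) (Fin n) ℂ, star p = p ∧ p * p = p ∧
            y = p ⊗ₜ[ℂ] (MulOpposite.op (1 - p))} ↔
      envMul n x = 0 := by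
  have hS : {y : Matrix (Fin n) (Fin n) ℂ ⊗[ℂ] (Matrix (Fin n) (Fin n) ℂ)ᵐᵒᵖ |
        ∃ p : Matrix (Fin n) (Fin n) ℂ, star p = p ∧ p * p = p ∧ y = p ⊗ₜ[ℂ] op (1 - p)} =
      (fun p => p ⊗ₜ[ℂ] op (1 - p)) '' {p | IsStarProjection p} := by
    ext y
    simp only [Set.mem_ofPred_eq, Set.mem_image, isStarProjection_iff', and_assoc, eq_comm (a := y)]
    exact exists_congr fun p => by tauto
  rw [hS, span_tmul_one_sub_eq_envelopingMulKer span_isStarProjection, mem_envelopingMulKer,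
    envMul_eq_mulLeftRight]

theorem stmt4 (n : ℕ) (hn : 1 ≤ n)
    (x : Matrix (Fin n) (Fin n) ℂ ⊗[ℂ] (Matrix (Fin n) (Fin n) ℂ)ᵐᵒᵖ) :
    x ∈ Ideal.span
        {y : Matrix (Fin n) (Fin n) ℂ ⊗[ℂ] (Matrix (Fin n) (Fin n) ℂ)ᵐᵒᵖ |
          ∃ p : Matrix (Fin n) (Fin n) ℂ, star p = p ∧ p * p = p ∧
            y = p ⊗ₜ[ℂ] (MulOpposite.op (1 - p))} ↔
      envMul n x = 0 :=
  stmt4_general n x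
end

section
/- Let I be a finite set with |I| ≥ 2 and let V = ℂ^I with standard basis (e_i). In V ⊗ V, the linear span of the symmetrized indicator tensors 1_S ⊗ 1_{I∖S} + 1_{I∖S} ⊗ 1_S, where S ranges over all nonempty proper subsets of I and 1_S = Σ_{i∈S} e_i, equals the linear span of the elements e_i ⊗ e_j + e_j ⊗ e_i for all pairs i ≠ j in I. -/
open TensorProduct

/-- The indicator vector `1_S ∈ ℂ^I` of a finite set `S ⊆ I`. -/
def indVec {I : Type*} [Fintype I] [DecidableEq I] (S : Finset I) : I → ℂ :=
  fun i => if i ∈ S then 1 else 0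

lemma indVec_eq_sum {I : Type*} [Fintype I] [DecidableEq I] (S : Finset I) :
    indVec S = ∑ i ∈ S, Pi.single i (1 : ℂ) := by
  funext k
  simp [indVec, Finset.sum_apply, Pi.single_apply]

lemma indVec_singleton {I : Type*} [Fintype I] [DecidableEq I] (i : I) :
    indVec ({i} : Finset I) = Pi.single i (1 : ℂ) := by
  funext k
  simp [indVec, Pi.single_apply]

lemma indVec_compl_singleton {I : Type*} [Fintype I] [DecidableEq I] {i j : I} (hij : i ≠ j) :
    indVec (({i} : Finset I))ᶜ =
      Pi.single j (1 : ℂ) + indVec (({i, j} : Finset I))ᶜ := by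
  funext k
  simp only [indVec, Pi.add_apply, Pi.single_apply, Finset.mem_compl, Finset.mem_singleton,
    Finset.mem_insert]
  by_cases hki : k = i <;> by_cases hkj : k = j <;>
    simp [hki, hkj, hij, (by tauto : ¬ k = i ∨ True)] <;> tauto

lemma indVec_pair {I : Type*} [Fintype I] [DecidableEq I] {i j : I} (hij : i ≠ j) :
    indVec ({i, j} : Finset I) = Pi.single i (1 : ℂ) + Pi.single j (1 : ℂ) := by
  funext k
  simp only [indVec, Pi.add_apply, Pi.single_apply, Finset.mem_insert, Finset.mem_singleton]
  by_cases hki : k = i <;> by_cases hkj : k = j <;> simp_all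

theorem stmt10 (I : Type*) [Fintype I] [DecidableEq I] (hI : 2 ≤ Fintype.card I) :
    Submodule.span ℂ
        {x : (I → ℂ) ⊗[ℂ] (I → ℂ) |
          ∃ S : Finset I, S.Nonempty ∧ S ≠ Finset.univ ∧
            x = indVec S ⊗ₜ[ℂ] indVec Sᶜ + indVec Sᶜ ⊗ₜ[ℂ] indVec S} =
      Submodule.span ℂ
        {x : (I → ℂ) ⊗[ℂ] (I → ℂ) |
          ∃ i j : I, i ≠ j ∧
            x = Pi.single i (1 : ℂ) ⊗ₜ[ℂ] Pi.single j (1 : ℂ) +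
              Pi.single j (1 : ℂ) ⊗ₜ[ℂ] Pi.single i (1 : ℂ)} := by
  have hT : ∀ S : Finset I,
      indVec S ⊗ₜ[ℂ] indVec Sᶜ + indVec Sᶜ ⊗ₜ[ℂ] indVec S =
        ∑ i ∈ S, ∑ j ∈ Sᶜ, (Pi.single i (1 : ℂ) ⊗ₜ[ℂ] Pi.single j (1 : ℂ) +
          Pi.single j (1 : ℂ) ⊗ₜ[ℂ] Pi.single i (1 : ℂ)) := by
    intro S
    rw [indVec_eq_sum S, indVec_eq_sum Sᶜ, sum_tmul, sum_tmul]
    simp only [tmul_sum]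
    rw [Finset.sum_comm (s := Sᶜ) (t := S)]
    rw [← Finset.sum_add_distrib]
    refine Finset.sum_congr rfl fun i hi => ?_
    rw [← Finset.sum_add_distrib]
  apply le_antisymm
  · rw [Submodule.span_le]
    rintro x ⟨S, hS, hSu, rfl⟩
    rw [hT]
    refine Submodule.sum_mem _ fun i hi => Submodule.sum_mem _ fun j hj => ?_
    refine Submodule.subset_span ⟨i, j, ?_, rfl⟩
    rintro rfl
    exact (Finset.mem_compl.mp hj) hi
  · rw [Submodule.span_le]
    rintro x ⟨i, j, hij, rfl⟩
    by_cases h : ({i, j} : Finset I) = Finset.univ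
    · have hc : (({i} : Finset I))ᶜ = {j} := by
        ext k
        simp only [Finset.mem_compl, Finset.mem_singleton]
        constructor
        · intro hk
          have : k ∈ ({i, j} : Finset I) := h ▸ Finset.mem_univ k
          simp only [Finset.mem_insert, Finset.mem_singleton] at this
          tauto
        · rintro rfl; exact hij.symm
      refine Submodule.subset_span ⟨{i}, Finset.singleton_nonempty i, ?_, ?_⟩
      · intro hu
        have : j ∈ ({i} : Finset I) := hu ▸ Finset.mem_univ j
        simp only [Finset.mem_singleton] at this
        exact hij this.symm
      · rw [hc, indVec_singleton, indVec_singleton]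
    · -- general case: use ½ (T_{i} + T_{j} - T_{i,j})
      have hiu : ({i} : Finset I) ≠ Finset.univ := by
        intro hu
        have : j ∈ ({i} : Finset I) := hu ▸ Finset.mem_univ j
        simp only [Finset.mem_singleton] at this
        exact hij this.symm
      have hju : ({j} : Finset I) ≠ Finset.univ := by
        intro hu
        have : i ∈ ({j} : Finset I) := hu ▸ Finset.mem_univ i
        simp only [Finset.mem_singleton] at this
        exact hij this
      set a : I → ℂ := Pi.single i (1 : ℂ) with ha
      set b : I → ℂ := Pi.single j (1 : ℂ) with hb
      set c := indVec (({i, j} : Finset I))ᶜ with hcdef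
      have h1 : indVec ({i} : Finset I) = a := indVec_singleton i
      have h2 : indVec ({j} : Finset I) = b := indVec_singleton j
      have h3 : indVec (({i} : Finset I))ᶜ = b + c := indVec_compl_singleton hij
      have h4 : indVec (({j} : Finset I))ᶜ = a + c := by
        rw [indVec_compl_singleton hij.symm, Finset.pair_comm j i]
      have h5 : indVec ({i, j} : Finset I) = a + b := indVec_pair hij
      have Ti : indVec ({i} : Finset I) ⊗ₜ[ℂ] indVec (({i} : Finset I))ᶜ +
          indVec (({i} : Finset I))ᶜ ⊗ₜ[ℂ] indVec ({i} : Finset I) ∈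
          Submodule.span ℂ {x : (I → ℂ) ⊗[ℂ] (I → ℂ) |
            ∃ S : Finset I, S.Nonempty ∧ S ≠ Finset.univ ∧
              x = indVec S ⊗ₜ[ℂ] indVec Sᶜ + indVec Sᶜ ⊗ₜ[ℂ] indVec S} :=
        Submodule.subset_span ⟨{i}, Finset.singleton_nonempty i, hiu, rfl⟩
      have Tj : indVec ({j} : Finset I) ⊗ₜ[ℂ] indVec (({j} : Finset I))ᶜ +
          indVec (({j} : Finset I))ᶜ ⊗ₜ[ℂ] indVec ({j} : Finset I) ∈
          Submodule.span ℂ {x : (I → ℂ) ⊗[ℂ] (I → ℂ) |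
            ∃ S : Finset I, S.Nonempty ∧ S ≠ Finset.univ ∧
              x = indVec S ⊗ₜ[ℂ] indVec Sᶜ + indVec Sᶜ ⊗ₜ[ℂ] indVec S} :=
        Submodule.subset_span ⟨{j}, Finset.singleton_nonempty j, hju, rfl⟩
      have Tij : indVec ({i, j} : Finset I) ⊗ₜ[ℂ] indVec (({i, j} : Finset I))ᶜ +
          indVec (({i, j} : Finset I))ᶜ ⊗ₜ[ℂ] indVec ({i, j} : Finset I) ∈
          Submodule.span ℂ {x : (I → ℂ) ⊗[ℂ] (I → ℂ) |
            ∃ S : Finset I, S.Nonempty ∧ S ≠ Finset.univ ∧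
              x = indVec S ⊗ₜ[ℂ] indVec Sᶜ + indVec Sᶜ ⊗ₜ[ℂ] indVec S} :=
        Submodule.subset_span ⟨{i, j}, Finset.insert_nonempty i {j}, h, rfl⟩
      have key : a ⊗ₜ[ℂ] b + b ⊗ₜ[ℂ] a =
          (2⁻¹ : ℂ) • ((indVec ({i} : Finset I) ⊗ₜ[ℂ] indVec (({i} : Finset I))ᶜ +
              indVec (({i} : Finset I))ᶜ ⊗ₜ[ℂ] indVec ({i} : Finset I)) +
            (indVec ({j} : Finset I) ⊗ₜ[ℂ] indVec (({j} : Finset I))ᶜ +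
              indVec (({j} : Finset I))ᶜ ⊗ₜ[ℂ] indVec ({j} : Finset I)) -
            (indVec ({i, j} : Finset I) ⊗ₜ[ℂ] indVec (({i, j} : Finset I))ᶜ +
              indVec (({i, j} : Finset I))ᶜ ⊗ₜ[ℂ] indVec ({i, j} : Finset I))) := by
        rw [h1, h2, h3, h4, h5]
        simp only [tmul_add, add_tmul]
        module
      rw [key]
      exact Submodule.smul_mem _ _ (Submodule.sub_mem _ (Submodule.add_mem _ Ti Tj) Tij)
end

section
/- For n ≥ 2, the quotient vector space ker μ / (ker μ ∩ ker μ°), where μ, μ° : M_n ⊗ M_n → M_n are the multiplication and opposite multiplication maps, has dimension n² − 1. -/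
/-!
Sending `x` to `μ° x` identifies `ker μ / (ker μ ∩ ker μ°)` with `μ°(ker μ)`, and this image is
exactly the space of traceless matrices: `tr ∘ μ° = tr ∘ μ` because `tr (a b) = tr (b a)`, and
conversely a traceless `C` is `μ° x` for `x = ∑ᵢⱼ Cᵢⱼ E₀ⱼ ⊗ Eᵢ₀`, while `μ x = (tr C) E₀₀ = 0`.
The trace is onto `ℂ`, so the traceless matrices have dimension `n² - 1`.
-/

open TensorProduct

/-- The quotient `ker μ / (ker μ ∩ ker μ°)`, realized as the image of `ker μ` in the
quotient of `Mₙ ⊗ Mₙ` by `ker μ ∩ ker μ°`. -/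
noncomputable def kerMulQuot (n : ℕ) :=
  Submodule.map (LinearMap.ker (matMul n) ⊓ LinearMap.ker (matMulOp n)).mkQ
    (LinearMap.ker (matMul n))

open LinearMap (ker mul')

namespace Submodule

variable {R M N : Type*} [Ring R] [AddCommGroup M] [Module R M] [AddCommGroup N] [Module R N]

/-- Both sides are `P ⧸ (P ⊓ ker f)`. -/
noncomputable def mapMkQInfKerEquivMap (P : Submodule R M) (f : M →ₗ[R] N) :
    P.map (P ⊓ ker f).mkQ ≃ₗ[R] P.map f :=
  (LinearEquiv.ofEq _ _ (LinearMap.range_domRestrict P _)).symm ≪≫ₗ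
    (LinearMap.quotKerEquivRange _).symm ≪≫ₗ
    quotEquivOfEq _ _ (by simp [LinearMap.ker_domRestrict, comap_inf]) ≪≫ₗ
    LinearMap.quotKerEquivRange _ ≪≫ₗ
    LinearEquiv.ofEq _ _ (LinearMap.range_domRestrict P f)

end Submodule

namespace Matrix

variable {ι R : Type*} [Fintype ι] [CommRing R]

theorem finrank_ker_traceLinearMap (K : Type*) [Field K] :
    Module.finrank K (ker (traceLinearMap ι K K)) = Fintype.card ι ^ 2 - 1 := by
  have h := (traceLinearMap ι K K).finrank_range_add_finrank_ker
  rw [Module.finrank_matrix, Module.finrank_self, ← sq] at h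
  rcases isEmpty_or_nonempty ι with hι | hι
  · simp_all
  · rw [LinearMap.range_eq_top.2 trace_surjective, finrank_top, Module.finrank_self] at h
    omega

theorem trace_mul'_comm (x : Matrix ι ι R ⊗[R] Matrix ι ι R) :
    trace (mul' R _ (TensorProduct.comm R _ _ x)) = trace (mul' R _ x) := by
  induction x using TensorProduct.induction_on with
  | zero => simp
  | tmul a b => simp [trace_mul_comm b a]
  | add x y hx hy => simp only [map_add, trace_add, hx, hy]

variable [DecidableEq ι]

noncomputable def mulOpPreimage (i₀ : ι) (C : Matrix ι ι R) : Matrix ι ι R ⊗[R] Matrix ι ι R :=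
  ∑ i, ∑ j, C i j • (single i₀ j 1 ⊗ₜ single i i₀ 1)

theorem mul'_mulOpPreimage (i₀ : ι) (C : Matrix ι ι R) :
    mul' R _ (mulOpPreimage i₀ C) = single i₀ i₀ (trace C) := by
  have h (i j : ι) :
      single i₀ j (1 : R) * single i i₀ 1 = if j = i then single i₀ i₀ 1 else 0 := by
    split_ifs with hji
    · rw [hji, single_mul_single_same, one_mul]
    · exact single_mul_single_of_ne (h := hji) ..
  simp only [mulOpPreimage, map_sum, map_smul, LinearMap.mul'_apply, h, smul_ite, smul_zero,
    Finset.sum_ite_eq', Finset.mem_univ, if_true, smul_single, smul_eq_mul, mul_one, trace, diag]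
  exact (map_sum (singleAddMonoidHom (α := R) i₀ i₀) _ _).symm

theorem mul'_comm_mulOpPreimage (i₀ : ι) (C : Matrix ι ι R) :
    mul' R _ (TensorProduct.comm R _ _ (mulOpPreimage i₀ C)) = C := by
  simp [mulOpPreimage, single_mul_single_same, smul_single, ← matrix_eq_sum_single]

theorem map_mul'_comm_ker_mul' :
    (ker (mul' R (Matrix ι ι R))).map (mul' R _ ∘ₗ (TensorProduct.comm R _ _).toLinearMap) =
      ker (traceLinearMap ι R R) := by
  apply le_antisymm
  · rintro _ ⟨x, hx, rfl⟩
    rw [SetLike.mem_coe, LinearMap.mem_ker] at hx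
    simp [trace_mul'_comm, hx]
  · intro C hC
    rw [LinearMap.mem_ker, traceLinearMap_apply] at hC
    rcases isEmpty_or_nonempty ι with hι | ⟨⟨i₀⟩⟩
    · rw [Subsingleton.elim C 0]
      exact zero_mem _
    · refine ⟨mulOpPreimage i₀ C, ?_, mul'_comm_mulOpPreimage i₀ C⟩
      rw [SetLike.mem_coe, LinearMap.mem_ker, mul'_mulOpPreimage, hC, single_zero]

end Matrix

theorem stmt11_general (n : ℕ) :
    Module.finrank ℂ ↥(kerMulQuot n) = n ^ 2 - 1 := by
  rw [kerMulQuot, (Submodule.mapMkQInfKerEquivMap _ _).finrank_eq, matMulOp, matMul,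
    Matrix.map_mul'_comm_ker_mul', Matrix.finrank_ker_traceLinearMap, Fintype.card_fin]

theorem stmt11 (n : ℕ) (hn : 2 ≤ n) :
    Module.finrank ℂ ↥(kerMulQuot n) = n ^ 2 - 1 :=
  stmt11_general n
end

section
/- Let G be a compact topological group acting separately continuously and linearly on a locally convex topological vector space E such that every G-orbit spans a finite-dimensional subspace of E. Then the dual (contragredient) action of G on the continuous dual E' equipped with the weak-* topology is jointly continuous. -/
/-!
For fixed `v`, the map `g ↦ g⁻¹ · v` is continuous with values in the finite-dimensional span
of the orbit of `v`, and the weak-* topology is the initial topology of the evaluations, so it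
suffices that `(x, φ) ↦ φ (f x)` is jointly continuous for every continuous linear map `f` out
of a finite-dimensional space. As `φ ∘ f` identifies inseparable points, we may pass to the
separation quotient, which is Hausdorff; there the coordinates `xᵢ` in a basis `bᵢ` are
continuous and `φ (f x) = ∑ xᵢ φ (f bᵢ)`.
-/

/-- The dual (contragredient) action of `g` on a continuous functional `φ`, as an element
of the weak-* dual: `(g · φ)(v) = φ(g⁻¹ · v)`. -/
noncomputable def dualAct {G E : Type*} [Group G]
    [AddCommGroup E] [Module ℝ E] [TopologicalSpace E]
    (ρ : G →* (E →ₗ[ℝ] E)) (hρ : ∀ g : G, Continuous (ρ g))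
    (g : G) (φ : WeakDual ℝ E) : WeakDual ℝ E :=
  ContinuousLinearMap.comp (φ : E →L[ℝ] ℝ) ⟨ρ g⁻¹, hρ g⁻¹⟩

namespace WeakDual

variable {𝕜 E F : Type*} [NontriviallyNormedField 𝕜] [CompleteSpace 𝕜]
  [AddCommGroup E] [Module 𝕜 E] [TopologicalSpace E]
  [AddCommGroup F] [Module 𝕜 F] [TopologicalSpace F] [IsTopologicalAddGroup F]
  [ContinuousSMul 𝕜 F] [FiniteDimensional 𝕜 F]

theorem continuous_eval_comp_of_finiteDimensional_of_t2Space [T2Space F] (f : F →L[𝕜] E) :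
    Continuous fun p : F × WeakDual 𝕜 E => p.2 (f p.1) := by
  let b := Module.finBasis 𝕜 F
  have h_expand : ∀ (x : F) (φ : WeakDual 𝕜 E),
      φ (f x) = ∑ i, b.equivFunL x i * φ (f (b i)) := by
    intro x φ
    calc φ (f x) = φ (f (∑ i, b.equivFun x i • b i)) := by rw [b.sum_equivFun x]
      _ = ∑ i, b.equivFunL x i * φ (f (b i)) := by
        simp only [map_sum, map_smul, smul_eq_mul]; rfl
  refine (continuous_finsetSum _ fun i _ => ?_).congr fun p => (h_expand p.1 p.2).symm
  exact ((continuous_apply i).comp (b.equivFunL.continuous.comp continuous_fst)).mul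
    ((eval_continuous _).comp continuous_snd)

theorem continuous_eval_comp_of_finiteDimensional (f : F →L[𝕜] E) :
    Continuous fun p : F × WeakDual 𝕜 E => p.2 (f p.1) := by
  let f' := f ∘L SeparationQuotient.outCLM 𝕜 F
  have h_factor : ∀ (x : F) (φ : WeakDual 𝕜 E),
      φ (f x) = φ (f' (SeparationQuotient.mk x)) := by
    intro x φ
    have : Inseparable x (SeparationQuotient.outCLM 𝕜 F (SeparationQuotient.mk x)) :=
      SeparationQuotient.mk_eq_mk.mp (SeparationQuotient.mk_outCLM 𝕜 _).symm
    exact (this.map (φ.continuous.comp f.continuous)).eq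
  simp_rw [h_factor]
  exact (continuous_eval_comp_of_finiteDimensional_of_t2Space f').comp
    (SeparationQuotient.continuous_mk.prodMap continuous_id)

end WeakDual

theorem stmt16_general (G E : Type*) [Group G] [TopologicalSpace G] [IsTopologicalGroup G]
    [AddCommGroup E] [Module ℝ E] [TopologicalSpace E] [IsTopologicalAddGroup E]
    [ContinuousSMul ℝ E]
    (ρ : G →* (E →ₗ[ℝ] E))
    -- separate continuity of the action
    (hρ_cont : ∀ g : G, Continuous (ρ g))
    (hρ_cont' : ∀ v : E, Continuous fun g : G => ρ g v)
    -- every orbit spans a finite-dimensional subspace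
    (h_orbit : ∀ v : E,
      FiniteDimensional ℝ ↥(Submodule.span ℝ (Set.range fun g : G => ρ g v))) :
    Continuous fun x : G × WeakDual ℝ E => dualAct ρ hρ_cont x.1 x.2 := by
  refine WeakDual.continuous_of_continuous_eval fun v => ?_
  let W := Submodule.span ℝ (Set.range fun g : G => ρ g v)
  have : FiniteDimensional ℝ W := h_orbit v
  let orbitInv : G → W := fun g => ⟨ρ g⁻¹ v, Submodule.subset_span ⟨g⁻¹, rfl⟩⟩
  have h_orbitInv : Continuous orbitInv :=
    ((hρ_cont' v).comp continuous_inv).subtype_mk _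
  exact (WeakDual.continuous_eval_comp_of_finiteDimensional W.subtypeL).comp
    (h_orbitInv.prodMap continuous_id)

theorem stmt16 (G E : Type*) [Group G] [TopologicalSpace G] [IsTopologicalGroup G]
    [CompactSpace G]
    [AddCommGroup E] [Module ℝ E] [TopologicalSpace E] [IsTopologicalAddGroup E]
    [ContinuousSMul ℝ E] [LocallyConvexSpace ℝ E]
    (ρ : G →* (E →ₗ[ℝ] E))
    -- separate continuity of the action
    (hρ_cont : ∀ g : G, Continuous (ρ g))
    (hρ_cont' : ∀ v : E, Continuous fun g : G => ρ g v)
    -- every orbit spans a finite-dimensional subspace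
    (h_orbit : ∀ v : E,
      FiniteDimensional ℝ ↥(Submodule.span ℝ (Set.range fun g : G => ρ g v))) :
    Continuous fun x : G × WeakDual ℝ E => dualAct ρ hρ_cont x.1 x.2 :=
  stmt16_general G E ρ hρ_cont hρ_cont' h_orbit
end
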